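/- Let p be a prime and E ⊂ ℚ_p a uniformly discrete set containing at least two points, and let n_E = max over distinct λ, λ' ∈ E of v_p(λ - λ'). Then the open set of zeros of the distribution μ_E^ is contained in the ball B(0, p^{n_E + 1}); in particular it is bounded. -/

import Mathlib

open MeasureTheory

noncomputable instance (p : ℕ) [Fact p.Prime] : MeasurableSpace ℚ_[p] := borel _
instance (p : ℕ) [Fact p.Prime] : BorelSpace ℚ_[p] := ⟨rfl⟩

/-- Haar measure on `ℚ_[p]`, normalized so that `ℤ_p` (the closed unit ball) has measure 1. -/
noncomputable def haarQp (p : ℕ) [Fact p.Prime] : Measure ℚ_[p] :=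
  Measure.addHaarMeasure
    ⟨⟨Metric.closedBall 0 1, isCompact_closedBall 0 1⟩,
      ⟨0, by
        rw [mem_interior_iff_mem_nhds]
        exact Metric.closedBall_mem_nhds 0 one_pos⟩⟩

/-- The standard additive character `χ(x) = e^{2πi {x}}` of `ℚ_[p]`, where `{x}` is the
p-adic fractional part of `x`. -/
noncomputable def stdChar (p : ℕ) [hp : Fact p.Prime] (x : ℚ_[p]) : ℂ :=
  let n : ℕ := (-x.valuation).toNat
  let y : ℤ_[p] := ⟨(p : ℚ_[p]) ^ n * x, by
    by_cases hx : x = 0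
    · simp [hx]
    · rw [norm_mul, norm_pow, Padic.norm_p, Padic.norm_eq_zpow_neg_valuation hx]
      have h1 : (1:ℝ) < p := by exact_mod_cast hp.out.one_lt
      have h0 : (0:ℝ) < p := by positivity
      rw [inv_pow, ← zpow_natCast, ← zpow_neg, ← zpow_add₀ (ne_of_gt h0)]
      apply zpow_le_one_of_nonpos₀ h1.le
      have h2 : -x.valuation ≤ ((-x.valuation).toNat : ℤ) := Int.self_le_toNat _
      omega⟩
  Complex.exp (2 * Real.pi * Complex.I * ((y.appr n : ℂ) / (p : ℂ) ^ n))

/-- `ξ` is a zero of the Bruhat–Schwartz distribution `μ̂_E` (the Fourier transform of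
`μ_E = ∑_{λ∈E} δ_λ`): there is `n₀` such that the pairing of `μ̂_E` against the indicator
of every ball `B(y, p^n)` with `y ∈ B(ξ, p^{n₀})` and `n ≤ n₀` vanishes; by the pairing
formula this means that the character sums `∑_{λ ∈ E ∩ B(0,p^{-n})} χ(yλ)⁻¹` vanish. -/
def IsZeroOfFourierMu (p : ℕ) [Fact p.Prime] (E : Set ℚ_[p]) (ξ : ℚ_[p]) : Prop :=
  ∃ n₀ : ℤ, ∀ y : ℚ_[p], ‖y - ξ‖ ≤ (p : ℝ) ^ n₀ → ∀ n : ℤ, n ≤ n₀ →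
    ∑' l : ↥(E ∩ {x : ℚ_[p] | ‖x‖ ≤ (p : ℝ) ^ (-n)}), (stdChar p (y * l))⁻¹ = 0

/-!
Fix a point `λ₀ ∈ E` and suppose `ξ` is a zero of `μ̂_E`. Averaging the vanishing character
sums over the centres `ξ + t p^{-n₀}` (orthogonality of characters on a finite group) isolates
the points of `E` near `λ₀`: `∑ χ(ξ(λ₀ - λ)) = 0`, the sum running over the finitely many
`λ ∈ E` with `|λ₀ - λ| ≤ p^{-n₀}`. This is a vanishing sum of `p`-power roots of unity containing
the term `1`. Writing its terms as powers of a primitive `p^{M+1}`-th root of unity `ζ` gives a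
rational polynomial vanishing at `ζ`, hence divisible by the cyclotomic polynomial
`Φ_{p^{M+1}}(X) = Φ_p(X^{p^M})`; so its coefficients are `p^M`-periodic and some term equals
`ζ^{p^M}`, a primitive `p`-th root of unity. For the corresponding `λ ≠ λ₀` this means
`|ξ(λ₀ - λ)| = p`, whence `|ξ| ≤ p^{v_p(λ₀ - λ) + 1} ≤ p^{n_E + 1}`.
-/

open Polynomial Finset

theorem Polynomial.coeff_add_prime_pow_eq_of_aeval_eq_zero {K : Type*} [Field K] [CharZero K]
    {p M : ℕ} [hp : Fact p.Prime] {ζ : K} (hζ : IsPrimitiveRoot ζ (p ^ (M + 1))) {f : ℚ[X]}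
    (hdeg : f.natDegree < p ^ (M + 1)) (hf : aeval ζ f = 0) {i : ℕ}
    (hi : i + p ^ M < p ^ (M + 1)) : f.coeff (i + p ^ M) = f.coeff i := by
  obtain ⟨g, rfl⟩ : cyclotomic (p ^ (M + 1)) ℚ ∣ f := by
    rw [cyclotomic_eq_minpoly_rat hζ (pow_pos hp.out.pos _)]
    exact minpoly.dvd ℚ ζ hf
  have hg : g.natDegree < p ^ M := by
    rcases eq_or_ne g 0 with rfl | hg0
    · simpa using pow_pos hp.out.pos M
    rw [natDegree_mul (cyclotomic_ne_zero _ ℚ) hg0, natDegree_cyclotomic,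
      Nat.totient_prime_pow_succ hp.out] at hdeg
    have : p ^ (M + 1) = p ^ M * (p - 1) + p ^ M := by
      rw [pow_succ, Nat.mul_sub_one, Nat.sub_add_cancel (Nat.le_mul_of_pos_right _ hp.out.pos)]
    omega
  have h := congrArg (coeff · (i + p ^ M))
    (show (X ^ p ^ M - 1) * (cyclotomic (p ^ (M + 1)) ℚ * g) = (X ^ p ^ (M + 1) - 1) * g by
      rw [← cyclotomic_prime_pow_mul_X_pow_sub_one]; ring)
  simp only [sub_mul, one_mul, coeff_sub, coeff_X_pow_mul'] at h
  rw [if_pos le_add_self, if_neg (show ¬p ^ (M + 1) ≤ i + p ^ M by omega), Nat.add_sub_cancel,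
    coeff_eq_zero_of_natDegree_lt (show g.natDegree < i + p ^ M by omega)] at h
  linarith

theorem Complex.exists_ne_one_pow_prime_eq_one_of_sum_eq_zero {ι : Type*} {p N : ℕ}
    [hp : Fact p.Prime] {s : Finset ι} {u : ι → ℂ} (hu : ∀ i ∈ s, u i ^ p ^ N = 1)
    (hsum : ∑ i ∈ s, u i = 0) {i₀ : ι} (hi₀ : i₀ ∈ s) (hu₀ : u i₀ = 1) :
    ∃ j ∈ s, u j ≠ 1 ∧ u j ^ p = 1 := by
  rcases N with _ | M
  · simp only [pow_zero, pow_one] at hu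
    rw [sum_congr rfl hu, sum_const, nsmul_one, Nat.cast_eq_zero, card_eq_zero] at hsum
    simp [hsum] at hi₀
  have : NeZero (p ^ (M + 1)) := ⟨(pow_pos hp.out.pos _).ne'⟩
  obtain ⟨ζ, hζ⟩ : ∃ ζ : ℂ, IsPrimitiveRoot ζ (p ^ (M + 1)) :=
    ⟨_, Complex.isPrimitiveRoot_exp _ (NeZero.ne _)⟩
  choose! a ha_lt ha using fun i (hi : i ∈ s) => hζ.eq_pow_of_pow_eq_one (hu i hi)
  set f : ℚ[X] := ∑ i ∈ s, X ^ a i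
  have hcoeff (m : ℕ) : f.coeff m = #{i ∈ s | a i = m} := by
    simp [f, coeff_X_pow, eq_comm]
  have hdeg : f.natDegree < p ^ (M + 1) := by
    have : f.natDegree ≤ p ^ (M + 1) - 1 :=
      natDegree_sum_le_of_forall_le _ _ fun i hi => by
        rw [natDegree_X_pow]; have := ha_lt i hi; omega
    have := pow_pos hp.out.pos (M + 1)
    omega
  have hf : aeval ζ f = 0 := by
    simp only [f, map_sum, map_pow, aeval_X]
    rw [sum_congr rfl ha, hsum]
  have ha₀ : a i₀ = 0 :=
    Nat.eq_zero_of_dvd_of_lt ((hζ.pow_eq_one_iff_dvd _).1 (by rw [ha i₀ hi₀, hu₀]))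
      (ha_lt i₀ hi₀)
  have hlt : p ^ M < p ^ (M + 1) := Nat.pow_lt_pow_right hp.out.one_lt (by omega)
  have hshift := coeff_add_prime_pow_eq_of_aeval_eq_zero hζ hdeg hf (i := 0) (by omega)
  rw [zero_add, hcoeff, hcoeff, Nat.cast_inj] at hshift
  obtain ⟨j, hj⟩ : {i ∈ s | a i = p ^ M}.Nonempty := by
    rw [← card_pos, hshift]
    exact card_pos.2 ⟨i₀, mem_filter.2 ⟨hi₀, ha₀⟩⟩
  obtain ⟨hjs, haj⟩ := mem_filter.1 hj
  refine ⟨j, hjs, ?_, ?_⟩ <;> rw [← ha j hjs, haj]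
  · exact hζ.pow_ne_one_of_pos_of_lt (NeZero.ne _) hlt
  · rw [← pow_mul, ← pow_succ]
    exact hζ.pow_eq_one

theorem Metric.finite_isBounded_inter_of_pairwise_le_dist {α : Type*} [MetricSpace α]
    [ProperSpace α] {K s : Set α} {ε : ℝ} (hε : 0 < ε)
    (hs : s.Pairwise fun x y => ε ≤ dist x y) (hK : Bornology.IsBounded K) :
    (K ∩ s).Finite := by
  refine finite_isBounded_inter_isClosed (isDiscrete_iff_forall_mem_exists_isOpen.2
    fun x hx => ⟨ball x ε, isOpen_ball, ?_⟩) hK (isClosed_of_pairwise_le_dist hε hs)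
  ext y
  refine ⟨fun ⟨hyx, hy⟩ => ?_, fun hy => ?_⟩
  · by_contra hne
    exact (hs hy hx hne).not_gt hyx
  · rw [Set.mem_singleton_iff.1 hy]
    exact ⟨mem_ball_self hε, hx⟩

namespace Padic

variable {p : ℕ} [hp : Fact p.Prime]

theorem norm_p_zpow_mul_le_one_iff {x : ℚ_[p]} {m : ℤ} :
    ‖(p : ℚ_[p]) ^ m * x‖ ≤ 1 ↔ ‖x‖ ≤ (p : ℝ) ^ m := by
  rw [norm_mul, norm_p_zpow, zpow_neg, inv_mul_le_iff₀ (zpow_pos (Nat.cast_pos.2 hp.out.pos) m),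
    mul_one]

theorem norm_p_pow_mul_le_one_iff {x : ℚ_[p]} {n : ℕ} :
    ‖(p : ℚ_[p]) ^ n * x‖ ≤ 1 ↔ ‖x‖ ≤ (p : ℝ) ^ n := by
  exact_mod_cast norm_p_zpow_mul_le_one_iff (m := n)

theorem norm_le_zpow_valuation_add_one {ξ z : ℚ_[p]} (hz : z ≠ 0) (h : ‖ξ * z‖ ≤ p) :
    ‖ξ‖ ≤ (p : ℝ) ^ (z.valuation + 1) := by
  have hp0 : (p : ℝ) ≠ 0 := Nat.cast_ne_zero.2 hp.out.ne_zero
  rw [norm_mul, norm_eq_zpow_neg_valuation hz] at h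
  calc ‖ξ‖ = ‖ξ‖ * (p : ℝ) ^ (-z.valuation) * (p : ℝ) ^ z.valuation := by
        rw [mul_assoc, ← zpow_add₀ hp0, neg_add_cancel, zpow_zero, mul_one]
    _ ≤ p * (p : ℝ) ^ z.valuation :=
        mul_le_mul_of_nonneg_right h (zpow_nonneg (Nat.cast_nonneg p) _)
    _ = (p : ℝ) ^ (z.valuation + 1) := by rw [zpow_add_one₀ hp0, mul_comm]

theorem norm_sub_appr_div_le_one {x : ℚ_[p]} {n : ℕ} {y : ℤ_[p]}
    (hy : (y : ℚ_[p]) = (p : ℚ_[p]) ^ n * x) :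
    ‖x - (y.appr n : ℚ_[p]) / (p : ℚ_[p]) ^ n‖ ≤ 1 := by
  have hpn : (p : ℚ_[p]) ^ n ≠ 0 := pow_ne_zero _ (Nat.cast_ne_zero.2 hp.out.ne_zero)
  have hspec : ‖(y - y.appr n : ℤ_[p])‖ ≤ (p : ℝ) ^ (-n : ℤ) :=
    (PadicInt.norm_le_pow_iff_mem_span_pow _ n).2 (PadicInt.appr_spec n y)
  have : x - (y.appr n : ℚ_[p]) / (p : ℚ_[p]) ^ n =
      ((y - y.appr n : ℤ_[p]) : ℚ_[p]) / (p : ℚ_[p]) ^ n := by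
    rw [PadicInt.coe_sub, hy]; field_simp; simp
  rw [this, norm_div, norm_p_pow, div_le_one (zpow_pos (Nat.cast_pos.2 hp.out.pos) _)]
  exact hspec

theorem exists_norm_sub_intCast_div_le_one (x : ℚ_[p]) :
    ∃ (a : ℤ) (n : ℕ), ‖x - a / (p : ℚ_[p]) ^ n‖ ≤ 1 := by
  obtain ⟨n, hn⟩ := pow_unbounded_of_one_lt ‖x‖ (Nat.one_lt_cast.2 hp.out.one_lt)
  exact ⟨_, n, norm_sub_appr_div_le_one (y := ⟨_, norm_p_pow_mul_le_one_iff.2 hn.le⟩) rfl⟩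

theorem exp_eq_exp_of_norm_sub_le_one {a b : ℤ} {n m : ℕ}
    (h : ‖(a : ℚ_[p]) / (p : ℚ_[p]) ^ n - b / (p : ℚ_[p]) ^ m‖ ≤ 1) :
    Complex.exp (2 * Real.pi * Complex.I * (a / (p : ℂ) ^ n)) =
      Complex.exp (2 * Real.pi * Complex.I * (b / (p : ℂ) ^ m)) := by
  have hp0 : (p : ℚ_[p]) ≠ 0 := Nat.cast_ne_zero.2 hp.out.ne_zero
  have hpc : (p : ℂ) ≠ 0 := Nat.cast_ne_zero.2 hp.out.ne_zero
  have hcast : ((a * p ^ m - b * p ^ n : ℤ) : ℚ_[p]) =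
      (p : ℚ_[p]) ^ (n + m) * (a / (p : ℚ_[p]) ^ n - b / (p : ℚ_[p]) ^ m) := by
    push_cast; field_simp; ring
  obtain ⟨k, hk⟩ := (norm_int_le_pow_iff_dvd _ (n + m)).1 <| by
    rw [hcast, norm_mul, norm_p_pow]
    exact mul_le_of_le_one_right (zpow_nonneg (Nat.cast_nonneg _) _) h
  rw [Complex.exp_eq_exp_iff_exists_int]
  refine ⟨k, ?_⟩
  have hkc : (a : ℂ) * (p : ℂ) ^ m - b * (p : ℂ) ^ n = (p : ℂ) ^ (n + m) * k := by
    exact_mod_cast congrArg (Int.cast : ℤ → ℂ) hk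
  field_simp
  linear_combination hkc

end Padic

section StdChar

variable {p : ℕ} [hp : Fact p.Prime]

theorem stdChar_eq_exp {x : ℚ_[p]} {a : ℤ} {n : ℕ} (h : ‖x - a / (p : ℚ_[p]) ^ n‖ ≤ 1) :
    stdChar p x = Complex.exp (2 * Real.pi * Complex.I * (a / (p : ℂ) ^ n)) := by
  unfold stdChar
  refine Padic.exp_eq_exp_of_norm_sub_le_one ?_
  rw [← dist_eq_norm] at h ⊢
  refine (dist_triangle_max _ x _).trans (max_le ?_ h)
  rw [dist_comm, dist_eq_norm]
  exact Padic.norm_sub_appr_div_le_one rfl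

theorem stdChar_add (x y : ℚ_[p]) : stdChar p (x + y) = stdChar p x * stdChar p y := by
  obtain ⟨a, n, ha⟩ := Padic.exists_norm_sub_intCast_div_le_one x
  obtain ⟨b, m, hb⟩ := Padic.exists_norm_sub_intCast_div_le_one y
  have hp0 : (p : ℚ_[p]) ≠ 0 := Nat.cast_ne_zero.2 hp.out.ne_zero
  have hpc : (p : ℂ) ≠ 0 := Nat.cast_ne_zero.2 hp.out.ne_zero
  have hab : ‖x + y - ((a * p ^ m + b * p ^ n : ℤ) : ℚ_[p]) / (p : ℚ_[p]) ^ (n + m)‖ ≤ 1 := by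
    have : x + y - ((a * p ^ m + b * p ^ n : ℤ) : ℚ_[p]) / (p : ℚ_[p]) ^ (n + m) =
        (x - a / (p : ℚ_[p]) ^ n) + (y - b / (p : ℚ_[p]) ^ m) := by
      push_cast; field_simp; ring
    rw [this]
    exact (Padic.nonarchimedean _ _).trans (max_le ha hb)
  rw [stdChar_eq_exp hab, stdChar_eq_exp ha, stdChar_eq_exp hb, ← Complex.exp_add]
  congr 1
  push_cast
  field_simp
  ring

theorem stdChar_eq_one_iff (x : ℚ_[p]) : stdChar p x = 1 ↔ ‖x‖ ≤ 1 := by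
  refine ⟨fun h => ?_, fun h => ?_⟩
  · obtain ⟨a, n, ha⟩ := Padic.exists_norm_sub_intCast_div_le_one x
    rw [stdChar_eq_exp ha, Complex.exp_eq_one_iff] at h
    obtain ⟨k, hk⟩ := h
    have hpc : (p : ℂ) ≠ 0 := Nat.cast_ne_zero.2 hp.out.ne_zero
    have hak : a = k * p ^ n := by
      have : (a : ℂ) = k * p ^ n := by
        field_simp at hk
        linear_combination hk
      exact_mod_cast this
    have hk1 : ‖(a : ℚ_[p]) / (p : ℚ_[p]) ^ n‖ ≤ 1 := by
      rw [hak]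
      push_cast
      rw [mul_div_cancel_right₀ _ (pow_ne_zero _ (Nat.cast_ne_zero.2 hp.out.ne_zero))]
      exact Padic.norm_int_le_one k
    simpa using (Padic.nonarchimedean _ _).trans (max_le ha hk1)
  · rw [stdChar_eq_exp (a := 0) (n := 0) (by simpa using h)]
    simp

theorem stdChar_zero : stdChar p 0 = 1 := (stdChar_eq_one_iff 0).2 (by simp)

theorem stdChar_neg (x : ℚ_[p]) : stdChar p (-x) = (stdChar p x)⁻¹ :=
  eq_inv_of_mul_eq_one_left (by rw [← stdChar_add, neg_add_cancel, stdChar_zero])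

theorem stdChar_natCast_mul (k : ℕ) (x : ℚ_[p]) : stdChar p (k * x) = stdChar p x ^ k := by
  induction k with
  | zero => simp [stdChar_zero]
  | succ k ih => rw [Nat.cast_succ, add_one_mul, stdChar_add, ih, pow_succ]

theorem sum_range_stdChar_natCast_mul (x : ℚ_[p]) {k : ℕ} (hx : ‖(p : ℚ_[p]) ^ k * x‖ ≤ 1) :
    ∑ t ∈ range (p ^ k), stdChar p (t * x) = if ‖x‖ ≤ 1 then (p ^ k : ℂ) else 0 := by
  simp_rw [stdChar_natCast_mul]
  split_ifs with h
  · simp [(stdChar_eq_one_iff x).2 h]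
  · rw [geom_sum_eq (mt (stdChar_eq_one_iff x).1 h), ← stdChar_natCast_mul, Nat.cast_pow,
      (stdChar_eq_one_iff _).2 hx]
    simp

theorem sum_filter_stdChar_eq_zero_of_forall_sum_eq_zero {T : Finset ℚ_[p]} {ξ δ l₀ : ℚ_[p]}
    {k : ℕ} (hT : ∀ l ∈ T, ‖(p : ℚ_[p]) ^ k * (δ * (l₀ - l))‖ ≤ 1)
    (h : ∀ t : ℕ, ∑ l ∈ T, (stdChar p ((ξ + t * δ) * l))⁻¹ = 0) :
    ∑ l ∈ T with ‖δ * (l₀ - l)‖ ≤ 1, stdChar p (ξ * (l₀ - l)) = 0 := by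
  have hpk : (p ^ k : ℂ) ≠ 0 := pow_ne_zero _ (Nat.cast_ne_zero.2 hp.out.ne_zero)
  refine (mul_eq_zero.1 ?_).resolve_left hpk
  calc (p ^ k : ℂ) * ∑ l ∈ T with ‖δ * (l₀ - l)‖ ≤ 1, stdChar p (ξ * (l₀ - l))
      = ∑ l ∈ T, stdChar p (ξ * (l₀ - l)) *
          ∑ t ∈ range (p ^ k), stdChar p (t * (δ * (l₀ - l))) := by
        rw [mul_sum, sum_filter]
        refine sum_congr rfl fun l hl => ?_
        rw [sum_range_stdChar_natCast_mul _ (hT l hl)]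
        split_ifs <;> ring
    _ = ∑ t ∈ range (p ^ k),
          stdChar p ((ξ + t * δ) * l₀) * ∑ l ∈ T, (stdChar p ((ξ + t * δ) * l))⁻¹ := by
        simp_rw [mul_sum]
        rw [sum_comm]
        refine sum_congr rfl fun t _ => sum_congr rfl fun l _ => ?_
        rw [← stdChar_neg, ← stdChar_add, ← stdChar_add]
        congr 1
        ring
    _ = 0 := by simp [h]

theorem exists_one_lt_norm_le_of_sum_stdChar_eq_zero {ι : Type*} {s : Finset ι} {x : ι → ℚ_[p]}
    (hsum : ∑ i ∈ s, stdChar p (x i) = 0) {i₀ : ι} (hi₀ : i₀ ∈ s) (hx₀ : ‖x i₀‖ ≤ 1) :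
    ∃ j ∈ s, 1 < ‖x j‖ ∧ ‖x j‖ ≤ p := by
  obtain ⟨N, hN⟩ := pow_unbounded_of_one_lt (∑ i ∈ s, ‖x i‖) (Nat.one_lt_cast.2 hp.out.one_lt)
  have hu (i : ι) (hi : i ∈ s) : stdChar p (x i) ^ p ^ N = 1 := by
    rw [← stdChar_natCast_mul, Nat.cast_pow, stdChar_eq_one_iff, Padic.norm_p_pow_mul_le_one_iff]
    exact (single_le_sum (fun i _ => norm_nonneg (x i)) hi).trans hN.le
  obtain ⟨j, hj, hne, hpow⟩ := Complex.exists_ne_one_pow_prime_eq_one_of_sum_eq_zero hu hsum hi₀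
    ((stdChar_eq_one_iff _).2 hx₀)
  refine ⟨j, hj, lt_of_not_ge (mt (stdChar_eq_one_iff _).2 hne), ?_⟩
  rw [← stdChar_natCast_mul, stdChar_eq_one_iff, ← pow_one (p : ℚ_[p]),
    Padic.norm_p_pow_mul_le_one_iff] at hpow
  simpa using hpow

end StdChar

theorem IsZeroOfFourierMu.exists_one_lt_norm_mul_sub_le {p : ℕ} [hp : Fact p.Prime]
    {E : Set ℚ_[p]} {ε : ℝ} (hε : 0 < ε) (hE : ∀ x ∈ E, ∀ y ∈ E, x ≠ y → ε ≤ ‖x - y‖)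
    {ξ : ℚ_[p]} (hξ : IsZeroOfFourierMu p E ξ) {l₀ : ℚ_[p]} (hl₀ : l₀ ∈ E) :
    ∃ l ∈ E, 1 < ‖ξ * (l₀ - l)‖ ∧ ‖ξ * (l₀ - l)‖ ≤ p := by
  obtain ⟨n₀, hξ⟩ := hξ
  set δ : ℚ_[p] := (p : ℚ_[p]) ^ (-n₀)
  obtain ⟨k, hk⟩ := pow_unbounded_of_one_lt ‖δ * l₀‖ (Nat.one_lt_cast.2 hp.out.one_lt)
  have hscale (x : ℚ_[p]) :
      ‖(p : ℚ_[p]) ^ k * (δ * x)‖ ≤ 1 ↔ ‖x‖ ≤ (p : ℝ) ^ (-(n₀ - k)) := by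
    rw [← mul_assoc, ← zpow_natCast, ← zpow_add₀ (Nat.cast_ne_zero.2 hp.out.ne_zero),
      Padic.norm_p_zpow_mul_le_one_iff, neg_sub, sub_eq_neg_add, add_comm]
  have hfin : (E ∩ {x : ℚ_[p] | ‖x‖ ≤ (p : ℝ) ^ (-(n₀ - k))}).Finite := by
    rw [Set.inter_comm]
    refine Metric.finite_isBounded_inter_of_pairwise_le_dist hε
      (fun x hx y hy hxy => (hE x hx y hy hxy).trans_eq (dist_eq_norm x y).symm)
      ((Metric.isBounded_closedBall (x := 0) (r := (p : ℝ) ^ (-(n₀ - k)))).subset fun x hx => ?_)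
    simpa using hx
  set T := hfin.toFinset
  have hsums (t : ℕ) : ∑ l ∈ T, (stdChar p ((ξ + t * δ) * l))⁻¹ = 0 := by
    rw [← Finset.tsum_subtype' T fun l => (stdChar p ((ξ + t * δ) * l))⁻¹, hfin.coe_toFinset]
    refine hξ _ ?_ _ (sub_le_self _ (Nat.cast_nonneg k))
    rw [add_sub_cancel_left, norm_mul, Padic.norm_p_zpow, neg_neg]
    exact mul_le_of_le_one_left (zpow_nonneg (Nat.cast_nonneg p) _)
      (by simpa using Padic.norm_int_le_one (t : ℤ))
  have hk₀ : ‖(p : ℚ_[p]) ^ k * (δ * l₀)‖ ≤ 1 := Padic.norm_p_pow_mul_le_one_iff.2 hk.le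
  have hl₀T : l₀ ∈ T := hfin.mem_toFinset.2 ⟨hl₀, (hscale l₀).1 hk₀⟩
  have hT (l : ℚ_[p]) (hl : l ∈ T) : ‖(p : ℚ_[p]) ^ k * (δ * (l₀ - l))‖ ≤ 1 := by
    rw [mul_sub, mul_sub, sub_eq_add_neg]
    exact (Padic.nonarchimedean _ _).trans
      (max_le hk₀ ((norm_neg _).trans_le ((hscale l).2 (hfin.mem_toFinset.1 hl).2)))
  obtain ⟨l, hl, hlt, hle⟩ := exists_one_lt_norm_le_of_sum_stdChar_eq_zero
    (sum_filter_stdChar_eq_zero_of_forall_sum_eq_zero hT hsums)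
    (Finset.mem_filter.2 ⟨hl₀T, by simp⟩) (by simp)
  exact ⟨l, (hfin.mem_toFinset.1 (Finset.mem_filter.1 hl).1).1, hlt, hle⟩

/-- For a uniformly discrete `E ⊂ ℚ_p` with at least two points and
`n_E = max_{λ ≠ λ' ∈ E} v_p(λ - λ')`, the set of zeros of `μ̂_E` is contained in the
ball `B(0, p^{n_E + 1})`; in particular it is bounded. -/
theorem stmt15 (p : ℕ) [Fact p.Prime] (E : Set ℚ_[p])
    (hE : ∃ ε > (0:ℝ), ∀ x ∈ E, ∀ y ∈ E, x ≠ y → ε ≤ ‖x - y‖)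
    (nE : ℤ)
    (hnE : IsGreatest {v : ℤ | ∃ x ∈ E, ∃ y ∈ E, x ≠ y ∧ (x - y).valuation = v} nE) :
    ∀ ξ : ℚ_[p], IsZeroOfFourierMu p E ξ → ‖ξ‖ ≤ (p : ℝ) ^ (nE + 1) := by
  intro ξ hξ
  obtain ⟨ε, hε, hsep⟩ := hE
  obtain ⟨l₀, hl₀, -⟩ := hnE.1
  obtain ⟨l, hl, hlt, hle⟩ := hξ.exists_one_lt_norm_mul_sub_le hε hsep hl₀
  have hne : l₀ - l ≠ 0 := fun h => by norm_num [h] at hlt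
  have hval : (l₀ - l).valuation ≤ nE := hnE.2 ⟨l₀, hl₀, l, hl, sub_ne_zero.1 hne, rfl⟩
  exact (Padic.norm_le_zpow_valuation_add_one hne hle).trans
    (zpow_le_zpow_right₀ (Nat.one_le_cast.2 (Fact.out : p.Prime).one_le) (by omega))
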